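/- The coordinate change r2 is symplectic: at every point (q1,p1,q2,p2) ∈ ℂ⁴ with q2 ≠ 0, the Jacobian matrix J of the map (q1,p1,q2,p2) ↦ ((q1q2+1)q2, p1/q2², 1/q2, −(q2·p2 − 2(q1q2 + 1/2)·p1/q2)·q2) satisfies Jᵀ · Ω · J = Ω, where Ω is the standard symplectic matrix with block-diagonal 2×2 blocks [[0,1],[−1,0]] in the coordinate ordering (q1,p1,q2,p2). Equivalently, dy2∧dx2 + dw2∧dz2 = dp1∧dq1 + dp2∧dq2 for (x2,y2,z2,w2) = ((q1q2+1)q2, p1/q2², 1/q2, −(q2p2 − 2(q1q2+1/2)p1/q2)q2). -/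

import Mathlib

open Matrix

/-- The Jacobian matrix of a map `F : ℂ⁴ → ℂ⁴` at a point `x`: the 4×4 matrix of
partial derivatives, `J i j = ∂F_i/∂x_j`. -/
noncomputable def jacobian (F : (Fin 4 → ℂ) → (Fin 4 → ℂ)) (x : Fin 4 → ℂ) :
    Matrix (Fin 4) (Fin 4) ℂ :=
  Matrix.of fun i j => fderiv ℂ (fun y => F y i) x (Pi.single j 1)

/-- The standard symplectic matrix with block-diagonal 2×2 blocks `[[0,1],[-1,0]]`
in the coordinate ordering `(q1, p1, q2, p2)`. -/
def standardSymplectic : Matrix (Fin 4) (Fin 4) ℂ :=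
  !![0, 1, 0, 0; -1, 0, 0, 0; 0, 0, 0, 1; 0, 0, -1, 0]

/-- The coordinate chart `r2`:
`(q1,p1,q2,p2) ↦ (x2,y2,z2,w2) =
  ((q1q2+1)q2, p1/q2², 1/q2, -(q2·p2 - 2(q1q2 + 1/2)·p1/q2)·q2)`. -/
noncomputable def chartR2 (x : Fin 4 → ℂ) : Fin 4 → ℂ :=
  ![(x 0 * x 2 + 1) * x 2, x 1 / x 2 ^ 2, 1 / x 2,
    -(x 2 * x 3 - 2 * (x 0 * x 2 + 1 / 2) * x 1 / x 2) * x 2]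

open ContinuousLinearMap in
set_option maxHeartbeats 1000000 in
/-- The coordinate change `r2` is symplectic: at every point with `q2 ≠ 0`, its
Jacobian matrix `J` satisfies `Jᵀ * Ω * J = Ω`, i.e.
`dy2∧dx2 + dw2∧dz2 = dp1∧dq1 + dp2∧dq2`. -/
theorem chartR2_symplectic (x : Fin 4 → ℂ) (h : x 2 ≠ 0) :
    (jacobian chartR2 x)ᵀ * standardSymplectic * jacobian chartR2 x =
      standardSymplectic := by
  have h0 : HasFDerivAt (fun y : Fin 4 → ℂ => y 0) ((ContinuousLinearMap.proj (0 : Fin 4) : (Fin 4 → ℂ) →L[ℂ] ℂ)) x := (ContinuousLinearMap.proj (0 : Fin 4) : (Fin 4 → ℂ) →L[ℂ] ℂ).hasFDerivAt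
  have h1 : HasFDerivAt (fun y : Fin 4 → ℂ => y 1) ((ContinuousLinearMap.proj (1 : Fin 4) : (Fin 4 → ℂ) →L[ℂ] ℂ)) x := (ContinuousLinearMap.proj (1 : Fin 4) : (Fin 4 → ℂ) →L[ℂ] ℂ).hasFDerivAt
  have h2 : HasFDerivAt (fun y : Fin 4 → ℂ => y 2) ((ContinuousLinearMap.proj (2 : Fin 4) : (Fin 4 → ℂ) →L[ℂ] ℂ)) x := (ContinuousLinearMap.proj (2 : Fin 4) : (Fin 4 → ℂ) →L[ℂ] ℂ).hasFDerivAt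
  have h3 : HasFDerivAt (fun y : Fin 4 → ℂ => y 3) ((ContinuousLinearMap.proj (3 : Fin 4) : (Fin 4 → ℂ) →L[ℂ] ℂ)) x := (ContinuousLinearMap.proj (3 : Fin 4) : (Fin 4 → ℂ) →L[ℂ] ℂ).hasFDerivAt
  have hi : HasFDerivAt (fun y : Fin 4 → ℂ => (y 2)⁻¹)
      ((-mulLeftRight ℂ ℂ (x 2)⁻¹ (x 2)⁻¹).comp ((ContinuousLinearMap.proj (2 : Fin 4) : (Fin 4 → ℂ) →L[ℂ] ℂ))) x :=
    (hasFDerivAt_inv' h).comp x ((ContinuousLinearMap.proj (2 : Fin 4) : (Fin 4 → ℂ) →L[ℂ] ℂ).hasFDerivAt)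
  set u : ℂ := (x 2)⁻¹ with hu
  have r0 : ∀ v : Fin 4 → ℂ, fderiv ℂ (fun y : Fin 4 → ℂ => (y 0 * y 2 + 1) * y 2) x v
      = x 2 ^ 2 * v 0 + (2 * x 0 * x 2 + 1) * v 2 := by
    intro v
    rw [(((h0.fun_mul h2).add_const 1).fun_mul h2).fderiv]
    simp [mulLeftRight]
    ring
  have r1 : ∀ v : Fin 4 → ℂ, fderiv ℂ (fun y : Fin 4 → ℂ => y 1 / y 2 ^ 2) x v
      = u * u * v 1 - 2 * x 1 * (u * u * u) * v 2 := by
    intro v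
    have e : (fun y : Fin 4 → ℂ => y 1 / y 2 ^ 2)
        = fun y : Fin 4 → ℂ => y 1 * ((y 2)⁻¹ * (y 2)⁻¹) := by
      funext y; rw [div_eq_mul_inv, pow_two, mul_inv]
    rw [e, (h1.fun_mul (hi.fun_mul hi)).fderiv]
    simp [mulLeftRight]
    ring
  have r2 : ∀ v : Fin 4 → ℂ, fderiv ℂ (fun y : Fin 4 → ℂ => 1 / y 2) x v
      = -(u * u) * v 2 := by
    intro v
    have e : (fun y : Fin 4 → ℂ => 1 / y 2) = fun y : Fin 4 → ℂ => (y 2)⁻¹ := by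
      funext y; rw [one_div]
    rw [e, hi.fderiv]
    simp [mulLeftRight]
    ring
  have r3 : ∀ v : Fin 4 → ℂ,
      fderiv ℂ (fun y : Fin 4 → ℂ => -(y 2 * y 3 - 2 * (y 0 * y 2 + 1 / 2) * y 1 / y 2) * y 2) x v
      = 2 * x 2 * x 1 * v 0 + (2 * x 0 * x 2 + 1) * v 1
        + (-2 * x 2 * x 3 + 2 * x 0 * x 1) * v 2 + (-(x 2 * x 2)) * v 3 := by
    intro v
    have hev : (fun y : Fin 4 → ℂ => -(y 2 * y 3 - 2 * (y 0 * y 2 + 1 / 2) * y 1 / y 2) * y 2)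
        =ᶠ[nhds x] fun y : Fin 4 → ℂ => -(y 2 * y 2 * y 3) + (2 * (y 0 * y 2 * y 1) + y 1) := by
      have hne : ∀ᶠ y : Fin 4 → ℂ in nhds x, y 2 ≠ 0 :=
        (continuous_apply 2).continuousAt.eventually_ne h
      exact hne.mono fun y hy => by field_simp; ring
    rw [hev.fderiv_eq, ((((h2.fun_mul h2).fun_mul h3).fun_neg.fun_add
      ((((h0.fun_mul h2).fun_mul h1).const_mul 2).fun_add h1)).fderiv)]
    simp [mulLeftRight]
    ring
  have r0' : ∀ v : Fin 4 → ℂ, fderiv ℂ (fun y : Fin 4 → ℂ => chartR2 y 0) x v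
      = x 2 ^ 2 * v 0 + (2 * x 0 * x 2 + 1) * v 2 := r0
  have r1' : ∀ v : Fin 4 → ℂ, fderiv ℂ (fun y : Fin 4 → ℂ => chartR2 y 1) x v
      = u * u * v 1 - 2 * x 1 * (u * u * u) * v 2 := r1
  have r2' : ∀ v : Fin 4 → ℂ, fderiv ℂ (fun y : Fin 4 → ℂ => chartR2 y 2) x v
      = -(u * u) * v 2 := r2
  have r3' : ∀ v : Fin 4 → ℂ, fderiv ℂ (fun y : Fin 4 → ℂ => chartR2 y 3) x v
      = 2 * x 2 * x 1 * v 0 + (2 * x 0 * x 2 + 1) * v 1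
        + (-2 * x 2 * x 3 + 2 * x 0 * x 1) * v 2 + (-(x 2 * x 2)) * v 3 := r3
  have hM : jacobian chartR2 x =
      !![x 2 ^ 2, 0, 2 * x 0 * x 2 + 1, 0;
         0, u * u, -2 * x 1 * (u * u * u), 0;
         0, 0, -(u * u), 0;
         2 * x 2 * x 1, 2 * x 0 * x 2 + 1, -2 * x 2 * x 3 + 2 * x 0 * x 1, -(x 2 * x 2)] := by
    ext i j
    fin_cases i <;>
      simp only [jacobian, Matrix.of_apply, Fin.zero_eta, Fin.mk_one,
        show (⟨2, by omega⟩ : Fin 4) = 2 from rfl, show (⟨3, by omega⟩ : Fin 4) = 3 from rfl]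
    · rw [r0']; fin_cases j <;> simp
    · rw [r1']; fin_cases j <;> simp
    · rw [r2']; fin_cases j <;> simp
    · rw [r3']; fin_cases j <;> simp
  have hT : (!![x 2 ^ 2, 0, 2 * x 0 * x 2 + 1, 0;
         0, u * u, -2 * x 1 * (u * u * u), 0;
         0, 0, -(u * u), 0;
         2 * x 2 * x 1, 2 * x 0 * x 2 + 1, -2 * x 2 * x 3 + 2 * x 0 * x 1, -(x 2 * x 2)])ᵀ
      = !![x 2 ^ 2, 0, 0, 2 * x 2 * x 1;
           0, u * u, 0, 2 * x 0 * x 2 + 1;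
           2 * x 0 * x 2 + 1, -2 * x 1 * (u * u * u), -(u * u), -2 * x 2 * x 3 + 2 * x 0 * x 1;
           0, 0, 0, -(x 2 * x 2)] := by
    ext i j
    fin_cases i <;> fin_cases j <;> rfl
  rw [hM, hT, standardSymplectic]
  ext i j
  fin_cases i <;> fin_cases j <;>
    · simp [Matrix.mul_apply, Matrix.transpose_apply, Fin.sum_univ_four, hu, Matrix.vecHead, Matrix.vecTail]
      try field_simp
      try ring
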